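/- For all δ₋, δ₊ > 0 and every real-valued f ∈ L¹(ℝ) ∩ L²(ℝ), one has ∫_ℝ ∫_ℝ γ_{δ₋,δ₊}(y − x) f(x) f(y) dx dy ≥ 0; that is, the kernel K(x,y) = γ_{δ₋,δ₊}(y − x) is monotone. -/

import Mathlib

open Real MeasureTheory

/-- The asymmetric Gaussian profile `γ_{δ₋,δ₊}`. -/
noncomputable def gammaAsym (δm δp : ℝ) (x : ℝ) : ℝ :=
  if x < 0 then Real.exp (-x ^ 2 / (2 * δm ^ 2)) else Real.exp (-x ^ 2 / (2 * δp ^ 2))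

/-- Gaussian convolution identity. -/
lemma gauss_conv (b : ℝ) (hb : 0 < b) (x y : ℝ) :
    ∫ z : ℝ, Real.exp (-(2 * b) * (x - z) ^ 2) * Real.exp (-(2 * b) * (y - z) ^ 2)
      = Real.sqrt (π / (4 * b)) * Real.exp (-b * (x - y) ^ 2) := by
  have h1 : ∀ z : ℝ, Real.exp (-(2 * b) * (x - z) ^ 2) * Real.exp (-(2 * b) * (y - z) ^ 2)
      = Real.exp (-b * (x - y) ^ 2) * Real.exp (-(4 * b) * (z - (x + y) / 2) ^ 2) := by
    intro z
    rw [← Real.exp_add, ← Real.exp_add]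
    congr 1
    ring
  simp_rw [h1]
  rw [integral_const_mul]
  rw [show (∫ z : ℝ, Real.exp (-(4 * b) * (z - (x + y) / 2) ^ 2))
      = ∫ z : ℝ, Real.exp (-(4 * b) * z ^ 2) from
    integral_sub_right_eq_self (fun u : ℝ => Real.exp (-(4 * b) * u ^ 2)) ((x + y) / 2)]
  rw [integral_gaussian]
  ring

/-- Integrability of a bounded-kernel quadratic form. -/
lemma kernel_integrable {f : ℝ → ℝ} (hf1 : Integrable f) {k : ℝ → ℝ} (hk : Measurable k)
    (hk1 : ∀ t, |k t| ≤ 1) :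
    Integrable (fun p : ℝ × ℝ => k (p.2 - p.1) * (f p.1 * f p.2))
      ((volume : Measure ℝ).prod volume) := by
  have hff : Integrable (fun p : ℝ × ℝ => f p.1 * f p.2)
      ((volume : Measure ℝ).prod volume) := hf1.mul_prod hf1
  refine hff.bdd_mul ?_ (Filter.Eventually.of_forall fun p => hk1 _)
  exact (hk.comp (measurable_snd.sub measurable_fst)).aestronglyMeasurable

set_option maxHeartbeats 1600000 in
/-- Positive definiteness of the Gaussian kernel. -/
lemma gauss_pd {f : ℝ → ℝ} (hf1 : Integrable f) (b : ℝ) (hb : 0 < b) :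
    0 ≤ ∫ p : ℝ × ℝ, Real.exp (-b * (p.2 - p.1) ^ 2) * (f p.1 * f p.2)
        ∂((volume : Measure ℝ).prod volume) := by
  set C : ℝ := Real.sqrt (π / (4 * b)) with hCdef
  have hC : 0 < C := Real.sqrt_pos.2 (by positivity)
  have h2b : (0 : ℝ) < 2 * b := by linarith
  -- the basic gaussian factor, integrable in z for each x
  have heint : ∀ x : ℝ, Integrable (fun z : ℝ => Real.exp (-(2 * b) * (x - z) ^ 2)) := by
    intro x
    have : Integrable (fun z : ℝ => Real.exp (-(2 * b) * (z - x) ^ 2)) :=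
      (integrable_exp_neg_mul_sq h2b).comp_sub_right x
    refine this.congr (Filter.Eventually.of_forall fun z => ?_)
    exact congrArg Real.exp (by ring)
  have hebdd : ∀ x z : ℝ, ‖Real.exp (-(2 * b) * (x - z) ^ 2)‖ ≤ 1 := by
    intro x z
    rw [Real.norm_eq_abs, abs_of_pos (Real.exp_pos _)]
    rw [Real.exp_le_one_iff]
    nlinarith [sq_nonneg (x - z)]
  -- the triple-variable function
  set Φ : (ℝ × ℝ) × ℝ → ℝ := fun q =>
    (f q.1.1 * Real.exp (-(2 * b) * (q.1.1 - q.2) ^ 2)) *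
    (f q.1.2 * Real.exp (-(2 * b) * (q.1.2 - q.2) ^ 2)) with hΦdef
  have hΦmeas : AEStronglyMeasurable Φ
      (((volume : Measure ℝ).prod volume).prod volume) := by
    have h1 : AEStronglyMeasurable (fun q : (ℝ × ℝ) × ℝ => f q.1.1)
        (((volume : Measure ℝ).prod volume).prod volume) :=
      hf1.aestronglyMeasurable.comp_fst.comp_fst
    have h2 : AEStronglyMeasurable (fun q : (ℝ × ℝ) × ℝ => f q.1.2)
        (((volume : Measure ℝ).prod volume).prod volume) :=
      hf1.aestronglyMeasurable.comp_snd.comp_fst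
    have h3 : Measurable (fun q : (ℝ × ℝ) × ℝ => Real.exp (-(2 * b) * (q.1.1 - q.2) ^ 2)) := by
      fun_prop
    have h4 : Measurable (fun q : (ℝ × ℝ) × ℝ => Real.exp (-(2 * b) * (q.1.2 - q.2) ^ 2)) := by
      fun_prop
    exact ((h1.mul h3.aestronglyMeasurable).mul (h2.mul h4.aestronglyMeasurable))
  -- integrability of Φ on (ℝ×ℝ)×ℝ
  have hΦint : Integrable Φ (((volume : Measure ℝ).prod volume).prod volume) := by
    rw [integrable_prod_iff hΦmeas]
    constructor
    · refine Filter.Eventually.of_forall fun p => ?_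
      have base : Integrable (fun z : ℝ =>
          (f p.1 * f p.2) * (Real.exp (-(2 * b) * (p.2 - z) ^ 2) *
            Real.exp (-(2 * b) * (p.1 - z) ^ 2))) := by
        refine Integrable.const_mul ?_ _
        refine (heint p.1).bdd_mul ?_ (Filter.Eventually.of_forall fun z => hebdd _ _)
        exact Measurable.aestronglyMeasurable (by fun_prop)
      refine base.congr (Filter.Eventually.of_forall fun z => ?_)
      simp only [hΦdef]
      ring
    · -- the inner integral of norms has a closed form
      have key : ∀ p : ℝ × ℝ, (∫ z : ℝ, ‖Φ (p, z)‖)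
          = |f p.1| * |f p.2| * (C * Real.exp (-b * (p.1 - p.2) ^ 2)) := by
        intro p
        have hnorm : ∀ z : ℝ, ‖Φ (p, z)‖ = (|f p.1| * |f p.2|) *
            (Real.exp (-(2 * b) * (p.1 - z) ^ 2) * Real.exp (-(2 * b) * (p.2 - z) ^ 2)) := by
          intro z
          simp only [hΦdef, Real.norm_eq_abs, abs_mul,
            abs_of_pos (Real.exp_pos _)]
          try ring
        simp_rw [hnorm]
        rw [integral_const_mul, gauss_conv b hb p.1 p.2]
      have hdom : Integrable (fun p : ℝ × ℝ => C * (|f p.1| * |f p.2|))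
          ((volume : Measure ℝ).prod volume) :=
        (hf1.abs.mul_prod hf1.abs).const_mul C
      have hclosed : Integrable (fun p : ℝ × ℝ =>
          |f p.1| * |f p.2| * (C * Real.exp (-b * (p.1 - p.2) ^ 2)))
          ((volume : Measure ℝ).prod volume) := by
        refine hdom.mono' ?_ (Filter.Eventually.of_forall fun p => ?_)
        · have h1 : AEStronglyMeasurable (fun p : ℝ × ℝ => |f p.1|)
              ((volume : Measure ℝ).prod volume) := hf1.abs.aestronglyMeasurable.comp_fst
          have h2 : AEStronglyMeasurable (fun p : ℝ × ℝ => |f p.2|)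
              ((volume : Measure ℝ).prod volume) := hf1.abs.aestronglyMeasurable.comp_snd
          have h3 : Measurable (fun p : ℝ × ℝ =>
              C * Real.exp (-b * (p.1 - p.2) ^ 2)) := by fun_prop
          exact (h1.mul h2).mul h3.aestronglyMeasurable
        · rw [Real.norm_eq_abs]
          have hexp1 : Real.exp (-b * (p.1 - p.2) ^ 2) ≤ 1 := by
            rw [Real.exp_le_one_iff]; nlinarith [sq_nonneg (p.1 - p.2)]
          have h0 : (0:ℝ) ≤ |f p.1| * |f p.2| := by positivity
          rw [abs_of_nonneg (by positivity)]
          nlinarith [mul_le_mul_of_nonneg_left hexp1 (mul_nonneg hC.le h0)]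
      exact hclosed.congr (Filter.Eventually.of_forall fun p => (key p).symm)
  -- swap to get integrability on ℝ × (ℝ×ℝ)
  have hΦswap : Integrable (fun q : ℝ × (ℝ × ℝ) => Φ q.swap)
      ((volume : Measure ℝ).prod ((volume : Measure ℝ).prod volume)) := hΦint.swap
  -- the smoothed function
  set h : ℝ → ℝ := fun z => ∫ x : ℝ, f x * Real.exp (-(2 * b) * (x - z) ^ 2) with hhdef
  have hsq : ∀ z : ℝ, h z * h z = ∫ p : ℝ × ℝ, Φ (p, z)
      ∂((volume : Measure ℝ).prod volume) := by
    intro z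
    rw [hhdef]
    exact (integral_prod_mul (f := fun x => f x * Real.exp (-(2 * b) * (x - z) ^ 2))
      (g := fun y => f y * Real.exp (-(2 * b) * (y - z) ^ 2))).symm
  have hnn : 0 ≤ ∫ z : ℝ, h z * h z := integral_nonneg fun z => mul_self_nonneg _
  have hswap_eq : (∫ z : ℝ, h z * h z)
      = ∫ p : ℝ × ℝ, (∫ z : ℝ, Φ (p, z)) ∂((volume : Measure ℝ).prod volume) := by
    simp_rw [hsq]
    exact integral_integral_swap (f := fun z (p : ℝ × ℝ) => Φ (p, z)) hΦswap
  have hinner : ∀ p : ℝ × ℝ, (∫ z : ℝ, Φ (p, z))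
      = C * (Real.exp (-b * (p.2 - p.1) ^ 2) * (f p.1 * f p.2)) := by
    intro p
    have hpt : ∀ z : ℝ, Φ (p, z) = (f p.1 * f p.2) *
        (Real.exp (-(2 * b) * (p.1 - z) ^ 2) * Real.exp (-(2 * b) * (p.2 - z) ^ 2)) := by
      intro z; simp only [hΦdef]; ring
    simp_rw [hpt]
    rw [integral_const_mul, gauss_conv b hb p.1 p.2]
    rw [show (p.1 - p.2) ^ 2 = (p.2 - p.1) ^ 2 by ring]
    ring
  have hfinal : (∫ z : ℝ, h z * h z)
      = C * ∫ p : ℝ × ℝ, Real.exp (-b * (p.2 - p.1) ^ 2) * (f p.1 * f p.2)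
          ∂((volume : Measure ℝ).prod volume) := by
    rw [hswap_eq]
    simp_rw [hinner]
    rw [integral_const_mul]
  rw [hfinal] at hnn
  exact (mul_nonneg_iff_of_pos_left hC).mp hnn

lemma gammaAsym_measurable (δm δp : ℝ) : Measurable (gammaAsym δm δp) := by
  unfold gammaAsym
  exact Measurable.ite (measurableSet_lt measurable_id measurable_const)
    (by fun_prop) (by fun_prop)

lemma gammaAsym_abs_le_one (δm δp : ℝ) (t : ℝ) : |gammaAsym δm δp t| ≤ 1 := by
  unfold gammaAsym
  split <;>
  · rw [abs_of_pos (Real.exp_pos _), Real.exp_le_one_iff]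
    exact div_nonpos_iff.mpr (Or.inr ⟨by nlinarith [sq_nonneg t], by positivity⟩)

lemma gammaAsym_add_neg (δm δp : ℝ) (t : ℝ) :
    gammaAsym δm δp t + gammaAsym δm δp (-t)
      = Real.exp (-(1 / (2 * δm ^ 2)) * t ^ 2) + Real.exp (-(1 / (2 * δp ^ 2)) * t ^ 2) := by
  unfold gammaAsym
  rcases lt_trichotomy t 0 with h | h | h
  · rw [if_pos h, if_neg (by linarith)]
    rw [show -t ^ 2 / (2 * δm ^ 2) = -(1 / (2 * δm ^ 2)) * t ^ 2 by ring,
      show -(-t) ^ 2 / (2 * δp ^ 2) = -(1 / (2 * δp ^ 2)) * t ^ 2 by ring]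
  · subst h
    norm_num
  · rw [if_neg (by linarith), if_pos (by linarith)]
    rw [show -t ^ 2 / (2 * δp ^ 2) = -(1 / (2 * δp ^ 2)) * t ^ 2 by ring,
      show -(-t) ^ 2 / (2 * δm ^ 2) = -(1 / (2 * δm ^ 2)) * t ^ 2 by ring]
    ring

theorem gammaAsym_kernel_monotone (δm δp : ℝ) (hm : 0 < δm) (hp : 0 < δp)
    (f : ℝ → ℝ) (hf1 : Integrable f) (hf2 : MemLp f 2 (volume : Measure ℝ)) :
    0 ≤ ∫ x : ℝ, ∫ y : ℝ, gammaAsym δm δp (y - x) * f x * f y := by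
  set bm : ℝ := 1 / (2 * δm ^ 2) with hbmdef
  set bp : ℝ := 1 / (2 * δp ^ 2) with hbpdef
  have hbm : 0 < bm := by rw [hbmdef]; positivity
  have hbp : 0 < bp := by rw [hbpdef]; positivity
  set F : ℝ × ℝ → ℝ := fun p => gammaAsym δm δp (p.2 - p.1) * (f p.1 * f p.2) with hFdef
  have hF : Integrable F ((volume : Measure ℝ).prod volume) :=
    kernel_integrable hf1 (gammaAsym_measurable δm δp) (gammaAsym_abs_le_one δm δp)
  have hgoal : (∫ x : ℝ, ∫ y : ℝ, gammaAsym δm δp (y - x) * f x * f y)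
      = ∫ p : ℝ × ℝ, F p ∂((volume : Measure ℝ).prod volume) := by
    rw [integral_prod F hF]
    simp only [hFdef]
    simp_rw [mul_assoc]
  rw [hgoal]
  -- the symmetrized kernels
  have hexm : Measurable (fun t : ℝ => Real.exp (-bm * t ^ 2)) := by fun_prop
  have hexp : Measurable (fun t : ℝ => Real.exp (-bp * t ^ 2)) := by fun_prop
  have hexm1 : ∀ t : ℝ, |Real.exp (-bm * t ^ 2)| ≤ 1 := fun t => by
    rw [abs_of_pos (Real.exp_pos _), Real.exp_le_one_iff]
    nlinarith [sq_nonneg t]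
  have hexp1 : ∀ t : ℝ, |Real.exp (-bp * t ^ 2)| ≤ 1 := fun t => by
    rw [abs_of_pos (Real.exp_pos _), Real.exp_le_one_iff]
    nlinarith [sq_nonneg t]
  have hGm : Integrable (fun p : ℝ × ℝ => Real.exp (-bm * (p.2 - p.1) ^ 2) * (f p.1 * f p.2))
      ((volume : Measure ℝ).prod volume) := kernel_integrable hf1 hexm hexm1
  have hGp : Integrable (fun p : ℝ × ℝ => Real.exp (-bp * (p.2 - p.1) ^ 2) * (f p.1 * f p.2))
      ((volume : Measure ℝ).prod volume) := kernel_integrable hf1 hexp hexp1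
  have hFs : Integrable (fun p : ℝ × ℝ => F p.swap)
      ((volume : Measure ℝ).prod volume) := hF.swap
  have hswap : (∫ p : ℝ × ℝ, F p.swap ∂((volume : Measure ℝ).prod volume))
      = ∫ p : ℝ × ℝ, F p ∂((volume : Measure ℝ).prod volume) :=
    integral_prod_swap F
  have hpt : ∀ p : ℝ × ℝ, F p + F p.swap
      = Real.exp (-bm * (p.2 - p.1) ^ 2) * (f p.1 * f p.2)
        + Real.exp (-bp * (p.2 - p.1) ^ 2) * (f p.1 * f p.2) := by
    intro p
    have := gammaAsym_add_neg δm δp (p.2 - p.1)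
    simp only [hFdef, Prod.fst_swap, Prod.snd_swap]
    rw [show p.1 - p.2 = -(p.2 - p.1) by ring]
    rw [hbmdef, hbpdef]
    linear_combination (f p.1 * f p.2) * this
  have hsum : (∫ p : ℝ × ℝ, F p ∂((volume : Measure ℝ).prod volume))
      + (∫ p : ℝ × ℝ, F p ∂((volume : Measure ℝ).prod volume))
      = (∫ p : ℝ × ℝ, Real.exp (-bm * (p.2 - p.1) ^ 2) * (f p.1 * f p.2)
          ∂((volume : Measure ℝ).prod volume))
        + ∫ p : ℝ × ℝ, Real.exp (-bp * (p.2 - p.1) ^ 2) * (f p.1 * f p.2)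
          ∂((volume : Measure ℝ).prod volume) := by
    nth_rewrite 2 [← hswap]
    rw [← integral_add hF hFs, ← integral_add hGm hGp]
    refine integral_congr_ae (Filter.Eventually.of_forall fun p => ?_)
    simpa using hpt p
  have h1 := gauss_pd hf1 bm hbm
  have h2 := gauss_pd hf1 bp hbp
  linarith [hsum, h1, h2]
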